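/- Let p > 1, N ≥ 1, and let η, ξ ∈ ℝ^N satisfy |η−ξ| + |ξ| > 0. Then |Φ_p(η,ξ)|² ≤ C_p (|η−ξ| + |ξ|)^{p−2} (Φ_p(η,ξ)·η), where C_p = (max{p−1, 2^{2−p}})² / min{p−1, 2^{2−p}}. -/

import Mathlib

/-
Put `a = η - ξ`, `b = ξ`, so that `η = a + b` and `Φ = |a|^{p-2} a + |b|^{p-2} b`, and write `m`,
`M` for the min and max in `C_p` and `S = |a| + |b|`. The bound is the product of the coercivity
estimate `m S^{p-2} |η|² ≤ Φ·η` and the growth estimate `|Φ| ≤ M S^{p-2} |η|`. In both, each side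
is affine in `a·b ∈ [-|a||b|, |a||b|]`, so it suffices to check them when `b` is parallel or
antiparallel to `a`. There they become, for `A, B ≥ 0` and `S = A + B`,
`m S^{p-1} ≤ A^{p-1} + B^{p-1} ≤ M S^{p-1}` and
`m S^{p-2} |A - B| ≤ |A^{p-1} - B^{p-1}| ≤ M S^{p-2} |A - B|`,
which follow from convexity (`p ≥ 2`) or concavity (`p ≤ 2`) of `s ↦ s^{p-1}` through
tangent-line and midpoint inequalities.
-/

/-- The translated p-Laplacian nonlinearity
`Φ_p(η,ξ) = |η−ξ|^{p−2}(η−ξ) + |ξ|^{p−2}ξ`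
(with the convention `|x|^{p−2}x = 0` when `x = 0`). -/
noncomputable def Phi (p : ℝ) {N : ℕ} (η ξ : EuclideanSpace ℝ (Fin N)) :
    EuclideanSpace ℝ (Fin N) :=
  (‖η - ξ‖ ^ (p - 2)) • (η - ξ) + (‖ξ‖ ^ (p - 2)) • ξ

open Real
open scoped InnerProductSpace

section RpowInequalities

variable {p q A B S : ℝ}

lemma rpow_sub_two_mul_self (hp : p ≠ 1) (hA : 0 ≤ A) : A ^ (p - 2) * A = A ^ (p - 1) := by
  rw [← rpow_add_one' hA (by contrapose! hp; linarith)]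
  ring_nf

lemma two_rpow_two_sub_mul_rpow_sub_two (hS : 0 ≤ S) :
    2 ^ (2 - p) * S ^ (p - 2) = (S / 2) ^ (p - 2) := by
  rw [div_rpow hS zero_le_two, show 2 - p = -(p - 2) by ring, rpow_neg zero_le_two]
  ring

lemma two_rpow_two_sub_mul_rpow_sub_one (hS : 0 ≤ S) :
    2 ^ (2 - p) * S ^ (p - 1) = 2 * (S / 2) ^ (p - 1) := by
  rw [div_rpow hS zero_le_two, show 2 - p = 1 - (p - 1) by ring, rpow_sub two_pos, rpow_one]
  ring

lemma sub_one_le_two_rpow_sub_two (hp : p ≤ 2) : p - 1 ≤ 2 ^ (p - 2) := by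
  rw [rpow_def_of_pos two_pos]
  nlinarith [add_one_le_exp (log 2 * (p - 2)), log_two_lt_d9]

lemma add_mul_rpow_sub_one_mul_sub_eq (hA : 0 < A) :
    A ^ q + q * A ^ (q - 1) * (B - A) = A ^ q * (1 + q * (B / A - 1)) := by
  rw [rpow_sub_one hA.ne']
  field_simp

lemma rpow_eq_rpow_mul_one_add_div_sub_one (hA : 0 < A) (hB : 0 ≤ B) :
    B ^ q = A ^ q * (1 + (B / A - 1)) ^ q := by
  rw [add_sub_cancel, div_rpow hB hA.le, mul_div_cancel₀ _ (rpow_pos_of_pos hA q).ne']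

lemma add_mul_rpow_sub_one_mul_sub_le_rpow (hq : 1 ≤ q) (hA : 0 < A) (hB : 0 ≤ B) :
    A ^ q + q * A ^ (q - 1) * (B - A) ≤ B ^ q := by
  rw [add_mul_rpow_sub_one_mul_sub_eq hA, rpow_eq_rpow_mul_one_add_div_sub_one hA hB]
  exact mul_le_mul_of_nonneg_left
    (one_add_mul_self_le_rpow_one_add (by linarith [div_nonneg hB hA.le]) hq) (by positivity)

lemma rpow_le_add_mul_rpow_sub_one_mul_sub (hq₀ : 0 ≤ q) (hq₁ : q ≤ 1) (hA : 0 < A)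
    (hB : 0 ≤ B) : B ^ q ≤ A ^ q + q * A ^ (q - 1) * (B - A) := by
  rw [add_mul_rpow_sub_one_mul_sub_eq hA, rpow_eq_rpow_mul_one_add_div_sub_one hA hB]
  exact mul_le_mul_of_nonneg_left
    (rpow_one_add_le_one_add_mul_self (by linarith [div_nonneg hB hA.le]) hq₀ hq₁) (by positivity)

lemma two_mul_half_add_rpow_le (hq : 1 ≤ q) (hA : 0 ≤ A) (hB : 0 ≤ B) :
    2 * ((A + B) / 2) ^ q ≤ A ^ q + B ^ q := by
  have h := (convexOn_rpow hq).2 (Set.mem_Ici.2 hA) (Set.mem_Ici.2 hB)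
    (by norm_num : (0 : ℝ) ≤ 1 / 2) (by norm_num : (0 : ℝ) ≤ 1 / 2) (by norm_num)
  simp only [smul_eq_mul] at h
  rw [show 1 / 2 * A + 1 / 2 * B = (A + B) / 2 by ring] at h
  linarith

lemma add_rpow_le_two_mul_half_add_rpow (hq₀ : 0 ≤ q) (hq₁ : q ≤ 1) (hA : 0 ≤ A) (hB : 0 ≤ B) :
    A ^ q + B ^ q ≤ 2 * ((A + B) / 2) ^ q := by
  have h := (concaveOn_rpow hq₀ hq₁).2 (Set.mem_Ici.2 hA) (Set.mem_Ici.2 hB)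
    (by norm_num : (0 : ℝ) ≤ 1 / 2) (by norm_num : (0 : ℝ) ≤ 1 / 2) (by norm_num)
  simp only [smul_eq_mul] at h
  rw [show 1 / 2 * A + 1 / 2 * B = (A + B) / 2 by ring] at h
  linarith

lemma min_mul_rpow_le_rpow_add_rpow (hp : 1 < p) (hA : 0 ≤ A) (hB : 0 ≤ B) :
    min (p - 1) (2 ^ (2 - p)) * (A + B) ^ (p - 1) ≤ A ^ (p - 1) + B ^ (p - 1) := by
  rcases le_or_gt 2 p with hp2 | hp2
  · calc min (p - 1) (2 ^ (2 - p)) * (A + B) ^ (p - 1) ≤ 2 ^ (2 - p) * (A + B) ^ (p - 1) := by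
          gcongr; exact min_le_right _ _
      _ ≤ A ^ (p - 1) + B ^ (p - 1) := by
          rw [two_rpow_two_sub_mul_rpow_sub_one (by positivity)]
          exact two_mul_half_add_rpow_le (by linarith) hA hB
  · calc min (p - 1) (2 ^ (2 - p)) * (A + B) ^ (p - 1) ≤ 1 * (A + B) ^ (p - 1) := by
          gcongr; exact (min_le_left _ _).trans (by linarith)
      _ ≤ A ^ (p - 1) + B ^ (p - 1) := by
          rw [one_mul]; exact rpow_add_le_add_rpow hA hB (by linarith) (by linarith)

lemma rpow_add_rpow_le_max_mul_rpow (hp : 1 < p) (hA : 0 ≤ A) (hB : 0 ≤ B) :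
    A ^ (p - 1) + B ^ (p - 1) ≤ max (p - 1) (2 ^ (2 - p)) * (A + B) ^ (p - 1) := by
  rcases le_or_gt 2 p with hp2 | hp2
  · calc A ^ (p - 1) + B ^ (p - 1) ≤ 1 * (A + B) ^ (p - 1) := by
          rw [one_mul]; exact add_rpow_le_rpow_add hA hB (by linarith)
      _ ≤ max (p - 1) (2 ^ (2 - p)) * (A + B) ^ (p - 1) := by
          gcongr; exact le_max_of_le_left (by linarith)
  · calc A ^ (p - 1) + B ^ (p - 1) ≤ 2 ^ (2 - p) * (A + B) ^ (p - 1) := by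
          rw [two_rpow_two_sub_mul_rpow_sub_one (by positivity)]
          exact add_rpow_le_two_mul_half_add_rpow (by linarith) (by linarith) hA hB
      _ ≤ max (p - 1) (2 ^ (2 - p)) * (A + B) ^ (p - 1) := by
          gcongr; exact le_max_right _ _

lemma min_mul_rpow_mul_sub_le_rpow_sub_rpow (hp : 1 < p) (hB : 0 ≤ B) (hBA : B < A) :
    min (p - 1) (2 ^ (2 - p)) * (A + B) ^ (p - 2) * (A - B) ≤ A ^ (p - 1) - B ^ (p - 1) := by
  have hA : 0 < A := hB.trans_lt hBA
  have hAB : 0 ≤ A - B := by linarith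
  rcases le_or_gt 2 p with hp2 | hp2
  · have hBB : B ^ (p - 2) * B ≤ A ^ (p - 2) * B := by gcongr
    calc min (p - 1) (2 ^ (2 - p)) * (A + B) ^ (p - 2) * (A - B)
        ≤ 2 ^ (2 - p) * (A + B) ^ (p - 2) * (A - B) := by gcongr ?_ * _ * _; exact min_le_right _ _
      _ ≤ A ^ (p - 2) * (A - B) := by
          rw [two_rpow_two_sub_mul_rpow_sub_two (by positivity)]
          gcongr ?_ * _
          exact rpow_le_rpow (by positivity) (by linarith) (by linarith)
      _ ≤ A ^ (p - 1) - B ^ (p - 1) := by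
          rw [← rpow_sub_two_mul_self hp.ne' hA.le, ← rpow_sub_two_mul_self hp.ne' hB]
          linarith
  · have ht := rpow_le_add_mul_rpow_sub_one_mul_sub (q := p - 1) (by linarith) (by linarith) hA hB
    rw [show p - 1 - 1 = p - 2 by ring] at ht
    calc min (p - 1) (2 ^ (2 - p)) * (A + B) ^ (p - 2) * (A - B)
        ≤ (p - 1) * A ^ (p - 2) * (A - B) := by
          gcongr ?_ * ?_ * _
          · exact min_le_left _ _
          · exact rpow_le_rpow_of_nonpos hA (by linarith) (by linarith)
      _ ≤ A ^ (p - 1) - B ^ (p - 1) := by linarith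

lemma rpow_sub_rpow_le_two_rpow_mul_rpow_mul_sub (hp : 1 < p) (hp2 : p < 2) (hB : 0 ≤ B)
    (hBA : B < A) : A ^ (p - 1) - B ^ (p - 1) ≤ 2 ^ (2 - p) * (A + B) ^ (p - 2) * (A - B) := by
  have hA : 0 < A := hB.trans_lt hBA
  have hAB : 0 < A - B := by linarith
  rw [two_rpow_two_sub_mul_rpow_sub_two (by linarith)]
  -- For `A ≥ 3B` use subadditivity of `s ^ (p - 1)` and `A - B ≥ (A + B) / 2`; otherwise the
  -- tangent line at `B` and `A + B < 4B`.
  rcases le_or_gt (3 * B) A with h3B | h3B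
  · have hsub := rpow_add_le_add_rpow hAB.le hB (p := p - 1) (by linarith) (by linarith)
    rw [sub_add_cancel] at hsub
    calc A ^ (p - 1) - B ^ (p - 1) ≤ (A - B) ^ (p - 1) := by linarith
      _ = (A - B) ^ (p - 2) * (A - B) := (rpow_sub_two_mul_self hp.ne' hAB.le).symm
      _ ≤ ((A + B) / 2) ^ (p - 2) * (A - B) := by
          gcongr ?_ * _
          exact rpow_le_rpow_of_nonpos (by linarith) (by linarith) (by linarith)
  · have hB' : 0 < B := by linarith
    have ht := rpow_le_add_mul_rpow_sub_one_mul_sub (q := p - 1) (by linarith) (by linarith) hB'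
      hA.le
    rw [show p - 1 - 1 = p - 2 by ring] at ht
    calc A ^ (p - 1) - B ^ (p - 1) ≤ (p - 1) * B ^ (p - 2) * (A - B) := by linarith
      _ ≤ 2 ^ (p - 2) * B ^ (p - 2) * (A - B) := by
          gcongr ?_ * _ * _
          exact sub_one_le_two_rpow_sub_two hp2.le
      _ = (2 * B) ^ (p - 2) * (A - B) := by rw [mul_rpow zero_le_two hB]
      _ ≤ ((A + B) / 2) ^ (p - 2) * (A - B) := by
          gcongr ?_ * _
          exact rpow_le_rpow_of_nonpos (by positivity) (by linarith) (by linarith)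

lemma rpow_sub_rpow_le_max_mul_rpow_mul_sub (hp : 1 < p) (hB : 0 ≤ B) (hBA : B < A) :
    A ^ (p - 1) - B ^ (p - 1) ≤ max (p - 1) (2 ^ (2 - p)) * (A + B) ^ (p - 2) * (A - B) := by
  have hA : 0 < A := hB.trans_lt hBA
  rcases le_or_gt 2 p with hp2 | hp2
  · have ht := add_mul_rpow_sub_one_mul_sub_le_rpow (q := p - 1) (by linarith) hA hB
    rw [show p - 1 - 1 = p - 2 by ring] at ht
    calc A ^ (p - 1) - B ^ (p - 1) ≤ (p - 1) * A ^ (p - 2) * (A - B) := by linarith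
      _ ≤ max (p - 1) (2 ^ (2 - p)) * (A + B) ^ (p - 2) * (A - B) := by
          gcongr ?_ * ?_ * _
          · exact le_max_left _ _
          · exact rpow_le_rpow hA.le (by linarith) (by linarith)
  · calc A ^ (p - 1) - B ^ (p - 1) ≤ 2 ^ (2 - p) * (A + B) ^ (p - 2) * (A - B) :=
          rpow_sub_rpow_le_two_rpow_mul_rpow_mul_sub hp hp2 hB hBA
      _ ≤ max (p - 1) (2 ^ (2 - p)) * (A + B) ^ (p - 2) * (A - B) := by
          gcongr ?_ * _ * _
          exact le_max_right _ _

lemma min_mul_rpow_mul_sub_sq_le (hp : 1 < p) (hA : 0 ≤ A) (hB : 0 ≤ B) :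
    min (p - 1) (2 ^ (2 - p)) * (A + B) ^ (p - 2) * (A - B) ^ 2
      ≤ (A ^ (p - 1) - B ^ (p - 1)) * (A - B) := by
  wlog hBA : B ≤ A generalizing A B
  · have h := this hB hA (by linarith)
    rw [add_comm] at h
    linarith
  rcases hBA.eq_or_lt with rfl | hBA
  · simp
  have h := mul_le_mul_of_nonneg_right (min_mul_rpow_mul_sub_le_rpow_sub_rpow hp hB hBA)
    (sub_nonneg.2 hBA.le)
  linarith

lemma rpow_sub_rpow_sq_le (hp : 1 < p) (hA : 0 ≤ A) (hB : 0 ≤ B) :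
    (A ^ (p - 1) - B ^ (p - 1)) ^ 2
      ≤ (max (p - 1) (2 ^ (2 - p)) * (A + B) ^ (p - 2)) ^ 2 * (A - B) ^ 2 := by
  wlog hBA : B ≤ A generalizing A B
  · have h := this hB hA (by linarith)
    rw [add_comm] at h
    linarith
  rcases hBA.eq_or_lt with rfl | hBA
  · simp
  have h := rpow_sub_rpow_le_max_mul_rpow_mul_sub hp hB hBA
  have h0 : 0 ≤ A ^ (p - 1) - B ^ (p - 1) :=
    sub_nonneg.2 (rpow_le_rpow hB hBA.le (by linarith))
  rw [← mul_pow]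
  exact pow_le_pow_left₀ h0 h 2

end RpowInequalities

section CollinearReduction

variable {F : Type*} [NormedAddCommGroup F] [InnerProductSpace ℝ F]

lemma add_mul_nonneg_of_abs_le {c d t K : ℝ} (ht : |t| ≤ K) (hK : 0 ≤ c + d * K)
    (hnegK : 0 ≤ c - d * K) : 0 ≤ c + d * t := by
  obtain ⟨htl, htu⟩ := abs_le.mp ht
  rcases le_total 0 d with hd | hd <;> nlinarith

lemma mul_norm_add_sq_le_inner_smul_add_smul {α β σ : ℝ} (a b : F)
    (hpar : σ * (‖a‖ + ‖b‖) ^ 2 ≤ (α * ‖a‖ + β * ‖b‖) * (‖a‖ + ‖b‖))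
    (hanti : σ * (‖a‖ - ‖b‖) ^ 2 ≤ (α * ‖a‖ - β * ‖b‖) * (‖a‖ - ‖b‖)) :
    σ * ‖a + b‖ ^ 2 ≤ ⟪α • a + β • b, a + b⟫_ℝ := by
  rw [norm_add_sq_real]
  simp only [inner_add_left, inner_add_right, real_inner_smul_left, real_inner_self_eq_norm_sq,
    real_inner_comm a b]
  have h := add_mul_nonneg_of_abs_le (abs_real_inner_le_norm a b)
    (c := α * ‖a‖ ^ 2 + β * ‖b‖ ^ 2 - σ * (‖a‖ ^ 2 + ‖b‖ ^ 2)) (d := α + β - 2 * σ)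
    (by linarith) (by linarith)
  linarith

lemma norm_smul_add_smul_sq_le {α β τ : ℝ} (a b : F)
    (hpar : (α * ‖a‖ + β * ‖b‖) ^ 2 ≤ τ * (‖a‖ + ‖b‖) ^ 2)
    (hanti : (α * ‖a‖ - β * ‖b‖) ^ 2 ≤ τ * (‖a‖ - ‖b‖) ^ 2) :
    ‖α • a + β • b‖ ^ 2 ≤ τ * ‖a + b‖ ^ 2 := by
  rw [norm_add_sq_real, norm_add_sq_real, norm_smul, norm_smul, real_inner_smul_left,
    real_inner_smul_right, mul_pow, mul_pow, Real.norm_eq_abs, Real.norm_eq_abs, sq_abs, sq_abs]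
  have h := add_mul_nonneg_of_abs_le (abs_real_inner_le_norm a b)
    (c := τ * (‖a‖ ^ 2 + ‖b‖ ^ 2) - α ^ 2 * ‖a‖ ^ 2 - β ^ 2 * ‖b‖ ^ 2) (d := 2 * τ - 2 * α * β)
    (by linarith) (by linarith)
  linarith

end CollinearReduction

section Phi

variable {p : ℝ} {N : ℕ}

lemma min_mul_rpow_mul_norm_sq_le_inner_Phi (hp : 1 < p) (η ξ : EuclideanSpace ℝ (Fin N)) :
    min (p - 1) (2 ^ (2 - p)) * (‖η - ξ‖ + ‖ξ‖) ^ (p - 2) * ‖η‖ ^ 2 ≤ ⟪Phi p η ξ, η⟫_ℝ := by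
  have hA := norm_nonneg (η - ξ)
  have hB := norm_nonneg ξ
  have key := mul_norm_add_sq_le_inner_smul_add_smul (η - ξ) ξ
    (α := ‖η - ξ‖ ^ (p - 2)) (β := ‖ξ‖ ^ (p - 2))
    (σ := min (p - 1) (2 ^ (2 - p)) * (‖η - ξ‖ + ‖ξ‖) ^ (p - 2)) ?_ ?_
  · rwa [sub_add_cancel] at key
  · have h := mul_le_mul_of_nonneg_right (min_mul_rpow_le_rpow_add_rpow hp hA hB) (add_nonneg hA hB)
    rw [← rpow_sub_two_mul_self hp.ne' (add_nonneg hA hB)] at h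
    rw [rpow_sub_two_mul_self hp.ne' hA, rpow_sub_two_mul_self hp.ne' hB]
    linear_combination h
  · rw [rpow_sub_two_mul_self hp.ne' hA, rpow_sub_two_mul_self hp.ne' hB]
    exact min_mul_rpow_mul_sub_sq_le hp hA hB

lemma norm_Phi_sq_le (hp : 1 < p) (η ξ : EuclideanSpace ℝ (Fin N)) :
    ‖Phi p η ξ‖ ^ 2 ≤ (max (p - 1) (2 ^ (2 - p)) * (‖η - ξ‖ + ‖ξ‖) ^ (p - 2)) ^ 2 * ‖η‖ ^ 2 := by
  have hA := norm_nonneg (η - ξ)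
  have hB := norm_nonneg ξ
  have key := norm_smul_add_smul_sq_le (η - ξ) ξ
    (α := ‖η - ξ‖ ^ (p - 2)) (β := ‖ξ‖ ^ (p - 2))
    (τ := (max (p - 1) (2 ^ (2 - p)) * (‖η - ξ‖ + ‖ξ‖) ^ (p - 2)) ^ 2) ?_ ?_
  · rwa [sub_add_cancel] at key
  · rw [rpow_sub_two_mul_self hp.ne' hA, rpow_sub_two_mul_self hp.ne' hB, ← mul_pow, mul_assoc,
      rpow_sub_two_mul_self hp.ne' (by positivity)]
    exact pow_le_pow_left₀ (by positivity) (rpow_add_rpow_le_max_mul_rpow hp hA hB) 2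
  · rw [rpow_sub_two_mul_self hp.ne' hA, rpow_sub_two_mul_self hp.ne' hB]
    exact rpow_sub_rpow_sq_le hp hA hB

end Phi

theorem phi_norm_sq_le_inner_general (p : ℝ) (hp : 1 < p) (N : ℕ)
    (η ξ : EuclideanSpace ℝ (Fin N)) :
    ‖Phi p η ξ‖ ^ 2
      ≤ (max (p - 1) (2 ^ (2 - p)) ^ 2 / min (p - 1) (2 ^ (2 - p)))
        * (‖η - ξ‖ + ‖ξ‖) ^ (p - 2) * (inner ℝ (Phi p η ξ) η : ℝ) := by
  have hm : 0 < min (p - 1) (2 ^ (2 - p)) := lt_min (by linarith) (by positivity)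
  calc ‖Phi p η ξ‖ ^ 2
      ≤ (max (p - 1) (2 ^ (2 - p)) * (‖η - ξ‖ + ‖ξ‖) ^ (p - 2)) ^ 2 * ‖η‖ ^ 2 :=
        norm_Phi_sq_le hp η ξ
    _ = (max (p - 1) (2 ^ (2 - p)) ^ 2 / min (p - 1) (2 ^ (2 - p))) * (‖η - ξ‖ + ‖ξ‖) ^ (p - 2)
          * (min (p - 1) (2 ^ (2 - p)) * (‖η - ξ‖ + ‖ξ‖) ^ (p - 2) * ‖η‖ ^ 2) := by
        field_simp
    _ ≤ (max (p - 1) (2 ^ (2 - p)) ^ 2 / min (p - 1) (2 ^ (2 - p))) * (‖η - ξ‖ + ‖ξ‖) ^ (p - 2)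
          * inner ℝ (Phi p η ξ) η := by
        gcongr
        exact min_mul_rpow_mul_norm_sq_le_inner_Phi hp η ξ

/-- The combined bound used in the energy estimate (3.12):
`|Φ_p(η,ξ)|² ≤ C_p (|η−ξ| + |ξ|)^{p−2} (Φ_p(η,ξ)·η)` with
`C_p = (max{p−1, 2^{2−p}})² / min{p−1, 2^{2−p}}`. -/
theorem phi_norm_sq_le_inner (p : ℝ) (hp : 1 < p) (N : ℕ) (hN : 1 ≤ N)
    (η ξ : EuclideanSpace ℝ (Fin N)) (h : 0 < ‖η - ξ‖ + ‖ξ‖) :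
    ‖Phi p η ξ‖ ^ 2
      ≤ (max (p - 1) (2 ^ (2 - p)) ^ 2 / min (p - 1) (2 ^ (2 - p)))
        * (‖η - ξ‖ + ‖ξ‖) ^ (p - 2) * (inner ℝ (Phi p η ξ) η : ℝ) :=
  phi_norm_sq_le_inner_general p hp N η ξ
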